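/- The map k ↦ φ_k from ℕ₀ to the maximal ideal space M(A(p)) is injective, and for each k₀ ∈ ℕ₀ a net (φ_{k_i})_{i∈I} converges to φ_{k₀} in the Gelfand (weak-*) topology of M(A(p)) if and only if (k_i)_{i∈I} is eventually constant equal to k₀; consequently {φ_k : k ∈ ℕ₀}, with the topology induced from M(A(p)), is homeomorphic to ℕ₀ with the discrete topology. -/

import Mathlib

open scoped BigOperators

/-- A weight: a sequence of positive reals. -/
structure GoodWeight : Type where
  p : ℕ → ℝ
  pos : ∀ n, 0 < p n

namespace GoodWeight

/-- The growth condition `lim_{n→∞} p(n)^(1/n) = ∞`. -/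
def Grows (w : GoodWeight) : Prop :=
  Filter.Tendsto (fun n : ℕ => w.p n ^ ((n : ℝ)⁻¹)) Filter.atTop Filter.atTop

/-- The Banach algebra `A(p)`, in its sequence model: a sequence `a : ℕ → ℂ` (the
Taylor coefficients at `0` of the corresponding entire function) such that
`sup_n p(n)|a(n)| < ∞`. -/
def Ap (w : GoodWeight) : Type :=
  {a : ℕ → ℂ // ∃ C : ℝ, ∀ n, w.p n * ‖a n‖ ≤ C}

namespace Ap

variable {w : GoodWeight}

instance : Zero w.Ap :=
  ⟨⟨fun _ => 0, 0, fun n => by simp⟩⟩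

instance : Add w.Ap :=
  ⟨fun a b =>
    ⟨fun n => a.1 n + b.1 n, by
      obtain ⟨C, hC⟩ := a.2
      obtain ⟨D, hD⟩ := b.2
      refine ⟨C + D, fun n => ?_⟩
      have h1 : ‖a.1 n + b.1 n‖ ≤ ‖a.1 n‖ + ‖b.1 n‖ :=
        norm_add_le _ _
      calc w.p n * ‖a.1 n + b.1 n‖
          ≤ w.p n * ‖a.1 n‖ + w.p n * ‖b.1 n‖ := by
            rw [← mul_add]; exact mul_le_mul_of_nonneg_left h1 (w.pos n).le
        _ ≤ C + D := add_le_add (hC n) (hD n)⟩⟩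

instance : Neg w.Ap :=
  ⟨fun a =>
    ⟨fun n => -a.1 n, by
      obtain ⟨C, hC⟩ := a.2
      exact ⟨C, fun n => by simpa using hC n⟩⟩⟩

/-- The weighted Hadamard multiplication `(f ∗ g)(n) = p(n) f̂(n) ĝ(n)`. -/
instance : Mul w.Ap :=
  ⟨fun a b =>
    ⟨fun n => (w.p n : ℂ) * a.1 n * b.1 n, by
      obtain ⟨C, hC⟩ := a.2
      obtain ⟨D, hD⟩ := b.2
      refine ⟨C * D, fun n => ?_⟩
      have e : w.p n * ‖(w.p n : ℂ) * a.1 n * b.1 n‖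
          = (w.p n * ‖a.1 n‖) * (w.p n * ‖b.1 n‖) := by
        rw [norm_mul, norm_mul, Complex.norm_real, Real.norm_eq_abs, abs_of_pos (w.pos n)]; ring
      rw [e]
      have h0C : (0:ℝ) ≤ C :=
        le_trans (mul_nonneg (w.pos 0).le (norm_nonneg _)) (hC 0)
      exact mul_le_mul (hC n) (hD n) (mul_nonneg (w.pos n).le (norm_nonneg _)) h0C⟩⟩

/-- The identity element `ε`, with coefficients `1/p(n)`. -/
noncomputable instance : One w.Ap :=
  ⟨⟨fun n => ((w.p n : ℂ))⁻¹, 1, fun n => by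
      rw [norm_inv, Complex.norm_real, Real.norm_eq_abs, abs_of_pos (w.pos n),
        mul_inv_cancel₀ (w.pos n).ne']⟩⟩

instance : SMul ℂ w.Ap :=
  ⟨fun c a =>
    ⟨fun n => c * a.1 n, by
      obtain ⟨C, hC⟩ := a.2
      refine ⟨‖c‖ * C, fun n => ?_⟩
      rw [norm_mul]
      calc w.p n * (‖c‖ * ‖a.1 n‖)
          = ‖c‖ * (w.p n * ‖a.1 n‖) := by ring
        _ ≤ ‖c‖ * C := mul_le_mul_of_nonneg_left (hC n) (norm_nonneg c)⟩⟩

noncomputable instance : CommRing w.Ap where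
  add := (· + ·)
  add_assoc a b c := Subtype.ext (funext fun n => add_assoc _ _ _)
  zero := 0
  zero_add a := Subtype.ext (funext fun n => zero_add _)
  add_zero a := Subtype.ext (funext fun n => add_zero _)
  add_comm a b := Subtype.ext (funext fun n => add_comm _ _)
  nsmul := nsmulRec
  zsmul := zsmulRec
  mul := (· * ·)
  mul_assoc a b c := Subtype.ext (funext fun n => by
    show (w.p n : ℂ) * ((w.p n : ℂ) * a.1 n * b.1 n) * c.1 n
        = (w.p n : ℂ) * a.1 n * ((w.p n : ℂ) * b.1 n * c.1 n)
    ring)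
  one := 1
  one_mul a := Subtype.ext (funext fun n => by
    show (w.p n : ℂ) * ((w.p n : ℂ))⁻¹ * a.1 n = a.1 n
    have h : ((w.p n : ℝ) : ℂ) ≠ 0 := by exact_mod_cast (w.pos n).ne'
    rw [mul_inv_cancel₀ h, one_mul])
  mul_one a := Subtype.ext (funext fun n => by
    show (w.p n : ℂ) * a.1 n * ((w.p n : ℂ))⁻¹ = a.1 n
    have h : ((w.p n : ℝ) : ℂ) ≠ 0 := by exact_mod_cast (w.pos n).ne'
    field_simp)
  left_distrib a b c := Subtype.ext (funext fun n => by
    show (w.p n : ℂ) * a.1 n * (b.1 n + c.1 n)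
        = (w.p n : ℂ) * a.1 n * b.1 n + (w.p n : ℂ) * a.1 n * c.1 n
    ring)
  right_distrib a b c := Subtype.ext (funext fun n => by
    show (w.p n : ℂ) * (a.1 n + b.1 n) * c.1 n
        = (w.p n : ℂ) * a.1 n * c.1 n + (w.p n : ℂ) * b.1 n * c.1 n
    ring)
  zero_mul a := Subtype.ext (funext fun n => by
    show (w.p n : ℂ) * 0 * a.1 n = 0
    ring)
  mul_zero a := Subtype.ext (funext fun n => by
    show (w.p n : ℂ) * a.1 n * 0 = 0
    ring)
  mul_comm a b := Subtype.ext (funext fun n => by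
    show (w.p n : ℂ) * a.1 n * b.1 n = (w.p n : ℂ) * b.1 n * a.1 n
    ring)
  neg := Neg.neg
  neg_add_cancel a := Subtype.ext (funext fun n => neg_add_cancel _)

instance : Module ℂ w.Ap where
  smul := (· • ·)
  one_smul a := Subtype.ext (funext fun n => by
    show (1 : ℂ) * a.1 n = a.1 n
    ring)
  mul_smul c d a := Subtype.ext (funext fun n => by
    show (c * d) * a.1 n = c * (d * a.1 n)
    ring)
  smul_zero c := Subtype.ext (funext fun n => by
    show c * 0 = 0
    ring)
  smul_add c a b := Subtype.ext (funext fun n => by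
    show c * (a.1 n + b.1 n) = c * a.1 n + c * b.1 n
    ring)
  add_smul c d a := Subtype.ext (funext fun n => by
    show (c + d) * a.1 n = c * a.1 n + d * a.1 n
    ring)
  zero_smul a := Subtype.ext (funext fun n => by
    show (0 : ℂ) * a.1 n = 0
    ring)

noncomputable instance : Algebra ℂ w.Ap :=
  Algebra.ofModule
    (fun c a b => Subtype.ext (funext fun n => by
      show (w.p n : ℂ) * (c * a.1 n) * b.1 n = c * ((w.p n : ℂ) * a.1 n * b.1 n)
      ring))
    (fun c a b => Subtype.ext (funext fun n => by
      show (w.p n : ℂ) * a.1 n * (c * b.1 n) = c * ((w.p n : ℂ) * a.1 n * b.1 n)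
      ring))

theorem bddAbove (a : w.Ap) :
    BddAbove (Set.range fun n => w.p n * ‖a.1 n‖) := by
  obtain ⟨C, hC⟩ := a.2
  exact ⟨C, by rintro x ⟨k, rfl⟩; exact hC k⟩

/-- The norm `‖f‖ = sup_n p(n) |f̂(n)|`, as an `AddGroupNorm`. -/
noncomputable def gnorm (w : GoodWeight) : AddGroupNorm w.Ap where
  toFun a := ⨆ n, w.p n * ‖a.1 n‖
  map_zero' := by
    have h : ∀ n : ℕ, w.p n * ‖(0 : w.Ap).1 n‖ = 0 := fun n => by
      show w.p n * ‖0‖ = 0; simp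
    simp [h]
  add_le' a b := by
    apply ciSup_le
    intro n
    have h1 : ‖a.1 n + b.1 n‖ ≤ ‖a.1 n‖ + ‖b.1 n‖ :=
      norm_add_le _ _
    calc w.p n * ‖(a + b).1 n‖
        ≤ w.p n * ‖a.1 n‖ + w.p n * ‖b.1 n‖ := by
          rw [← mul_add]; exact mul_le_mul_of_nonneg_left h1 (w.pos n).le
      _ ≤ (⨆ k, w.p k * ‖a.1 k‖) + ⨆ k, w.p k * ‖b.1 k‖ :=
          add_le_add (le_ciSup (bddAbove a) n) (le_ciSup (bddAbove b) n)
  neg' a := by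
    have h : (fun n => w.p n * ‖(-a).1 n‖)
        = fun n => w.p n * ‖a.1 n‖ := by
      funext n
      show w.p n * ‖-a.1 n‖ = w.p n * ‖a.1 n‖
      rw [norm_neg]
    show (⨆ n, w.p n * ‖(-a).1 n‖) = ⨆ n, w.p n * ‖a.1 n‖
    rw [h]
  eq_zero_of_map_eq_zero' a h := by
    apply Subtype.ext
    funext n
    have h1 : w.p n * ‖a.1 n‖ ≤ 0 := h ▸ le_ciSup (bddAbove a) n
    have h2 : (0:ℝ) ≤ w.p n * ‖a.1 n‖ :=
      mul_nonneg (w.pos n).le (norm_nonneg _)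
    have h3 : ‖a.1 n‖ = 0 := by
      rcases mul_eq_zero.mp (le_antisymm h1 h2) with h' | h'
      · exact absurd h' (w.pos n).ne'
      · exact h'
    exact norm_eq_zero.mp h3

noncomputable instance : NormedAddCommGroup w.Ap :=
  (gnorm w).toNormedAddCommGroup

theorem norm_def (a : w.Ap) : ‖a‖ = ⨆ n, w.p n * ‖a.1 n‖ := rfl

theorem le_norm (a : w.Ap) (n : ℕ) : w.p n * ‖a.1 n‖ ≤ ‖a‖ :=
  le_ciSup (bddAbove a) n

theorem norm_nonneg' (a : w.Ap) : 0 ≤ ‖a‖ :=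
  le_trans (mul_nonneg (w.pos 0).le (norm_nonneg _)) (le_norm a 0)

noncomputable instance : NormedCommRing w.Ap :=
  { (inferInstance : NormedAddCommGroup w.Ap), (inferInstance : CommRing w.Ap) with
    norm_mul_le := by
      intro a b
      apply ciSup_le
      intro n
      have e : w.p n * ‖(a * b).1 n‖
          = (w.p n * ‖a.1 n‖) * (w.p n * ‖b.1 n‖) := by
        show w.p n * ‖(w.p n : ℂ) * a.1 n * b.1 n‖ = _
        rw [norm_mul, norm_mul, Complex.norm_real, Real.norm_eq_abs, abs_of_pos (w.pos n)]; ring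
      rw [e]
      exact mul_le_mul (le_norm a n) (le_norm b n)
        (mul_nonneg (w.pos n).le (norm_nonneg _)) (norm_nonneg' a) }

noncomputable instance : NormedSpace ℂ w.Ap where
  norm_smul_le c a := by
    apply ciSup_le
    intro n
    have e : w.p n * ‖(c • a).1 n‖
        = ‖c‖ * (w.p n * ‖a.1 n‖) := by
      show w.p n * ‖c * a.1 n‖ = _
      rw [norm_mul]; ring
    rw [e]
    calc ‖c‖ * (w.p n * ‖a.1 n‖)
        ≤ ‖c‖ * ‖a‖ := mul_le_mul_of_nonneg_left (le_norm a n) (norm_nonneg c)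
      _ = ‖c‖ * ‖a‖ := rfl

noncomputable instance : NormedAlgebra ℂ w.Ap :=
  { (inferInstance : Algebra ℂ w.Ap) with
    norm_smul_le := fun c a => norm_smul_le c a }

end Ap

end GoodWeight


namespace GoodWeight

/-- The evaluation functional `f ↦ p(k) f̂(k)`, as a linear map. -/
noncomputable def evalLM (w : GoodWeight) (k : ℕ) : w.Ap →ₗ[ℂ] ℂ where
  toFun f := (w.p k : ℂ) * f.1 k
  map_add' a b := by
    show (w.p k : ℂ) * (a.1 k + b.1 k) = (w.p k : ℂ) * a.1 k + (w.p k : ℂ) * b.1 k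
    ring
  map_smul' c a := by
    show (w.p k : ℂ) * (c * a.1 k) = c * ((w.p k : ℂ) * a.1 k)
    ring

/-- The evaluation character `φ_k : f ↦ p(k) f̂(k)` of `A(p)`, as an element of the
maximal ideal space (character space) of `A(p)` with its Gelfand (weak-*) topology. -/
noncomputable def charAt (w : GoodWeight) (k : ℕ) : WeakDual.characterSpace ℂ w.Ap := by
  refine ⟨(evalLM w k).mkContinuous 1 (fun f => ?_), ?_, ?_⟩
  · rw [one_mul]
    show ‖(w.p k : ℂ) * f.1 k‖ ≤ ‖f‖
    rw [norm_mul, Complex.norm_real, Real.norm_eq_abs, abs_of_pos (w.pos k)]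
    exact Ap.le_norm f k
  · intro h
    have h2 := congrArg (fun ψ : WeakDual ℂ w.Ap => ψ (1 : w.Ap)) h
    have h1 : (w.p k : ℂ) * ((w.p k : ℂ))⁻¹ = 0 := h2
    rw [mul_inv_cancel₀ (by exact_mod_cast (w.pos k).ne' : ((w.p k : ℝ) : ℂ) ≠ 0)] at h1
    exact one_ne_zero h1
  · intro x y
    show (w.p k : ℂ) * ((w.p k : ℂ) * x.1 k * y.1 k)
        = ((w.p k : ℂ) * x.1 k) * ((w.p k : ℂ) * y.1 k)
    ring

end GoodWeight

/-! The element `δ_k` with the single coefficient `1 / p(k)` at `k` satisfies `φ_j(δ_k) = [j = k]`,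
and its Gelfand transform `ψ ↦ ψ(δ_k)` is weak-* continuous. So `{ψ | ψ(δ_k) ≠ 0}` is an open set
containing `φ_k` and no other `φ_j`: `k ↦ φ_k` is a topological embedding of discrete `ℕ`, from
which injectivity, the description of convergent nets and the homeomorphism onto the range follow.
-/

namespace Topology

theorem isEmbedding_of_forall_exists_preimage_subset_singleton {ι X : Type*}
    [TopologicalSpace ι] [DiscreteTopology ι] [TopologicalSpace X] {f : ι → X}
    (h : ∀ i, ∃ U ∈ 𝓝 (f i), f ⁻¹' U ⊆ {i}) : IsEmbedding f := by
  refine ⟨isInducing_iff_nhds.2 fun i => le_antisymm ?_ ?_, fun i j hij => ?_⟩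
  · exact continuous_of_discreteTopology.tendsto i |>.le_comap
  · obtain ⟨U, hU, hUi⟩ := h i
    rw [nhds_discrete ι, Filter.le_pure_iff]
    exact Filter.mem_of_superset (Filter.preimage_mem_comap hU) hUi
  · obtain ⟨U, hU, hUi⟩ := h j
    exact hUi (show f i ∈ U from hij ▸ mem_of_mem_nhds hU)

end Topology

namespace GoodWeight

noncomputable def delta (w : GoodWeight) (k : ℕ) : w.Ap :=
  ⟨fun n => if n = k then ((w.p k : ℂ))⁻¹ else 0, 1, fun n => by
    dsimp only
    split_ifs with h
    · subst h
      rw [norm_inv, Complex.norm_real, Real.norm_of_nonneg (w.pos n).le,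
        mul_inv_cancel₀ (w.pos n).ne']
    · simp⟩

theorem charAt_apply (w : GoodWeight) (k : ℕ) (f : w.Ap) :
    charAt w k f = (w.p k : ℂ) * f.1 k := rfl

theorem charAt_delta (w : GoodWeight) (j k : ℕ) :
    charAt w j (delta w k) = if j = k then 1 else 0 := by
  rw [charAt_apply]
  show (w.p j : ℂ) * (if j = k then ((w.p k : ℂ))⁻¹ else 0) = _
  split_ifs with h
  · subst h
    exact mul_inv_cancel₀ (Complex.ofReal_ne_zero.2 (w.pos j).ne')
  · exact mul_zero _

theorem isEmbedding_charAt (w : GoodWeight) : Topology.IsEmbedding (charAt w) := by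
  refine Topology.isEmbedding_of_forall_exists_preimage_subset_singleton fun k => ?_
  refine ⟨{ψ | ψ (delta w k) ≠ 0}, ?_, fun j hj => ?_⟩
  · refine (isOpen_ne_fun (WeakDual.gelfandTransform ℂ w.Ap (delta w k)).continuous
      continuous_const).mem_nhds ?_
    simp [charAt_delta]
  · by_contra hjk
    exact hj (by simpa [charAt_delta] using hjk)

end GoodWeight

theorem pointCharacters_general (w : GoodWeight) :
    Function.Injective (GoodWeight.charAt w) ∧
    (∀ (I : Type) [Preorder I] [Nonempty I] [IsDirected I (· ≤ ·)] (k : I → ℕ) (k₀ : ℕ),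
      Filter.Tendsto (fun i => GoodWeight.charAt w (k i)) Filter.atTop
          (nhds (GoodWeight.charAt w k₀)) ↔
        (∀ᶠ i in Filter.atTop, k i = k₀)) ∧
    Nonempty (ℕ ≃ₜ Set.range (GoodWeight.charAt w)) := by
  have he := GoodWeight.isEmbedding_charAt w
  refine ⟨he.injective, fun I _ _ _ k k₀ => ?_, ⟨he.toHomeomorph⟩⟩
  rw [← Function.comp_def, ← he.tendsto_nhds_iff, nhds_discrete, Filter.tendsto_pure]

/-- `k ↦ φ_k` is injective; a net `(φ_{k_i})` converges to `φ_{k₀}` in the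
Gelfand topology of the maximal ideal space iff `(k_i)` is eventually constant `= k₀`;
hence `{φ_k : k ∈ ℕ₀}` with the induced topology is homeomorphic to discrete `ℕ`. -/
theorem pointCharacters (w : GoodWeight) (hg : w.Grows) :
    Function.Injective (GoodWeight.charAt w) ∧
    (∀ (I : Type) [Preorder I] [Nonempty I] [IsDirected I (· ≤ ·)] (k : I → ℕ) (k₀ : ℕ),
      Filter.Tendsto (fun i => GoodWeight.charAt w (k i)) Filter.atTop
          (nhds (GoodWeight.charAt w k₀)) ↔
        (∀ᶠ i in Filter.atTop, k i = k₀)) ∧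
    Nonempty (ℕ ≃ₜ Set.range (GoodWeight.charAt w)) :=
  pointCharacters_general w
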